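/- As ν → ∞ through positive real values, 2·ν^{ν/2+1}·|zw|^{ν/2}·√(K_ν(2√ν·|z|)·K_ν(2√ν·|w|))·Ĩ_ν(ν·z·w̄) → e^{z·w̄ − |z|²/2 − |w|²/2} uniformly for (z,w) in compact subsets of (ℂ∖{0})². Equivalently, 2ν·√(K_ν(2√ν|z|)·K_ν(2√ν|w|))·I_ν(2√(ν·z·w̄)) ∼ (z·w̄/|zw|)^{ν/2}·G(z,w), where G(z,w) = e^{z·w̄ − |z|²/2 − |w|²/2} is the Ginibre kernel. -/

import Mathlib

open Filter

/-- Modified Bessel function of the second kind `K_ν(x)`. -/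
noncomputable def besselK (ν x : ℝ) : ℝ :=
  ∫ t in Set.Ioi (0 : ℝ), Real.exp (-x * Real.cosh t) * Real.cosh (ν * t)

/-- The entire function `Ĩ_ν(w) = ∑_{k≥0} w^k/(k!·Γ(ν+k+1))`, so that the modified Bessel
function of the first kind is `I_ν(u) = (u/2)^ν·Ĩ_ν(u²/4)`. -/
noncomputable def Itilde (ν : ℝ) (w : ℂ) : ℂ :=
  ∑' k : ℕ, w ^ k / (((k.factorial : ℕ) : ℂ) * ((Real.Gamma (ν + (k : ℝ) + 1) : ℝ) : ℂ))

open Set MeasureTheory Real Topology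
open scoped Nat

/-!
Write `T_ν(u) = Γ(ν+1) Ĩ_ν(νu)` and `A_ν(y) = 2 ν^{ν/2} y^ν K_ν(2√ν y) / Γ(ν)`. The expression
in the theorem is `√(A_ν(|z|) A_ν(|w|)) · T_ν(z w̄)`, and the Ginibre kernel is
`√(e^{-|z|²} e^{-|w|²}) · e^{z w̄}`, so it suffices that `T_ν → exp` and `A_ν(y) → e^{-y²}`
uniformly on bounded sets.

The `k`-th Taylor coefficient of `T_ν` is `1/k!` times `Γ(ν+1) ν^k / Γ(ν+k+1) = ∏_{j<k} ν/(ν+j+1)`,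
which differs from `1` by at most `k²/ν`; hence `|T_ν(u) - e^u| ≤ e^{4|u|}/ν`.

The substitution `u = (x/2) e^t` gives `K_ν(x) = ½ (x/2)^{-ν} ∫₀^∞ e^{-u - x²/(4u)} u^{ν-1} du`,
so `A_ν(y)` is the mean of `e^{-νy²/U}` for a Gamma-distributed `U` of shape `ν`. Since
`t ↦ e^{-t}` is `1`-Lipschitz on `[0, ∞)` and `E[(ν/U - 1)²] = (ν+2)/((ν-1)(ν-2))`, we get
`|A_ν(y) - e^{-y²}| ≤ y² √((ν+2)/((ν-1)(ν-2)))`.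
-/

section UniformConvergence

variable {ι α : Type*} {l : Filter ι} {s : Set α}

theorem tendstoUniformlyOn_of_dist_le {β : Type*} [PseudoMetricSpace β] {F : ι → α → β}
    {f : α → β} {δ : ι → ℝ} (hδ : Tendsto δ l (𝓝 0))
    (h : ∀ᶠ i in l, ∀ x ∈ s, dist (f x) (F i x) ≤ δ i) : TendstoUniformlyOn F f l s := by
  refine Metric.tendstoUniformlyOn_iff.2 fun ε hε => ?_
  filter_upwards [h, hδ.eventually (gt_mem_nhds hε)] with i hi hδi x hx
  exact (hi x hx).trans_lt hδi

theorem TendstoUniformlyOn.mul_of_bounded {R : Type*} [NonUnitalSeminormedRing R]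
    {F G : ι → α → R} {f g : α → R} {Cf Cg : ℝ}
    (hF : TendstoUniformlyOn F f l s) (hG : TendstoUniformlyOn G g l s)
    (hf : ∀ x ∈ s, ‖f x‖ ≤ Cf) (hg : ∀ x ∈ s, ‖g x‖ ≤ Cg) :
    TendstoUniformlyOn (fun i x => F i x * G i x) (fun x => f x * g x) l s := by
  refine Metric.tendstoUniformlyOn_iff.2 fun ε hε => ?_
  set D := max (max Cf Cg) 0
  have hD : 0 ≤ D := le_max_right _ 0
  set δ := min 1 (ε / (2 * D + 1))
  have hδ : 0 < δ := lt_min one_pos (by positivity)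
  have hδ1 : δ ≤ 1 := min_le_left _ _
  have hδε : δ * (2 * D + 1) ≤ ε := by
    calc δ * (2 * D + 1) ≤ ε / (2 * D + 1) * (2 * D + 1) := by gcongr; exact min_le_right _ _
      _ = ε := div_mul_cancel₀ _ (by positivity)
  filter_upwards [Metric.tendstoUniformlyOn_iff.1 hF δ hδ, Metric.tendstoUniformlyOn_iff.1 hG δ hδ]
    with i hFi hGi x hx
  have hFx : ‖f x - F i x‖ < δ := by simpa [dist_eq_norm] using hFi x hx
  have hGx : ‖g x - G i x‖ < δ := by simpa [dist_eq_norm] using hGi x hx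
  rw [dist_eq_norm]
  calc ‖f x * g x - F i x * G i x‖
      = ‖f x * (g x - G i x) + (f x - F i x) * g x - (f x - F i x) * (g x - G i x)‖ := by
        congr 1; noncomm_ring
    _ ≤ ‖f x‖ * ‖g x - G i x‖ + ‖f x - F i x‖ * ‖g x‖ + ‖f x - F i x‖ * ‖g x - G i x‖ :=
        (norm_sub_le _ _).trans (add_le_add ((norm_add_le _ _).trans
          (add_le_add (norm_mul_le _ _) (norm_mul_le _ _))) (norm_mul_le _ _))
    _ ≤ D * ‖g x - G i x‖ + ‖f x - F i x‖ * D + ‖f x - F i x‖ * ‖g x - G i x‖ := by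
        gcongr
        exacts [(hf x hx).trans ((le_max_left _ _).trans (le_max_left _ _)),
          (hg x hx).trans ((le_max_right _ _).trans (le_max_left _ _))]
    _ < ε := by nlinarith [norm_nonneg (f x - F i x), norm_nonneg (g x - G i x)]

end UniformConvergence

theorem Real.sq_sqrt_sub_sqrt_le_abs_sub (x y : ℝ) : (√x - √y) ^ 2 ≤ |x - y| := by
  have hmax : ∀ t : ℝ, √t = √(max t 0) := fun t => by
    rcases le_total t 0 with ht | ht
    · rw [max_eq_right ht, sqrt_eq_zero'.2 ht, sqrt_zero]
    · rw [max_eq_left ht]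
  refine le_trans ?_ (abs_max_sub_max_le_abs x y 0)
  rw [hmax x, hmax y]
  obtain ⟨a, ha, ha'⟩ : ∃ a, 0 ≤ a ∧ max x 0 = a ^ 2 :=
    ⟨√(max x 0), sqrt_nonneg _, (sq_sqrt (le_max_right _ _)).symm⟩
  obtain ⟨b, hb, hb'⟩ : ∃ b, 0 ≤ b ∧ max y 0 = b ^ 2 :=
    ⟨√(max y 0), sqrt_nonneg _, (sq_sqrt (le_max_right _ _)).symm⟩
  rw [ha', hb', sqrt_sq ha, sqrt_sq hb]
  rcases le_total a b with hab | hab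
  · rw [abs_of_nonpos (by nlinarith)]; nlinarith
  · rw [abs_of_nonneg (by nlinarith)]; nlinarith

theorem Real.uniformContinuous_sqrt : UniformContinuous Real.sqrt := by
  refine Metric.uniformContinuous_iff.2 fun ε hε => ⟨ε ^ 2, by positivity, fun {x y} h => ?_⟩
  rw [Real.dist_eq] at h ⊢
  calc |√x - √y| ≤ √|x - y| := abs_le_sqrt (sq_sqrt_sub_sqrt_le_abs_sub x y)
    _ < √(ε ^ 2) := sqrt_lt_sqrt (abs_nonneg _) h
    _ = ε := sqrt_sq hε.le

theorem norm_tsum_mul_pow_div_factorial_sub_exp_le {a : ℕ → ℂ} {δ B : ℝ}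
    (ha : ∀ k, ‖a k - 1‖ ≤ δ * k ^ 2) {u : ℂ} (hu : ‖u‖ ≤ B) :
    ‖∑' k, a k * u ^ k / (k ! : ℂ) - Complex.exp u‖ ≤ δ * exp (4 * B) := by
  have hδ : 0 ≤ δ := by simpa using (norm_nonneg _).trans (ha 1)
  have hexp : HasSum (fun k => u ^ k / (k ! : ℂ)) (Complex.exp u) := by
    rw [Complex.exp_eq_exp_ℂ]; exact NormedSpace.expSeries_div_hasSum_exp u
  have hexp4B : HasSum (fun k => δ * ((4 * B) ^ k / k !)) (δ * exp (4 * B)) := by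
    rw [exp_eq_exp_ℝ]; exact (NormedSpace.expSeries_div_hasSum_exp (4 * B)).mul_left δ
  have hbound : ∀ k, ‖(a k - 1) * u ^ k / (k ! : ℂ)‖ ≤ δ * ((4 * B) ^ k / k !) := fun k => by
    have hk : (k : ℝ) ^ 2 ≤ 4 ^ k := by
      rw [show (4 : ℝ) ^ k = (2 ^ k) ^ 2 by rw [← pow_mul, mul_comm, pow_mul]; norm_num]
      gcongr
      exact_mod_cast Nat.lt_two_pow_self.le
    rw [norm_div, norm_mul, norm_pow, Complex.norm_natCast, mul_pow, ← mul_div_assoc, ← mul_assoc]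
    gcongr
    exact (ha k).trans (by gcongr)
  have hdiff : Summable fun k => (a k - 1) * u ^ k / (k ! : ℂ) :=
    Summable.of_norm_bounded hexp4B.summable hbound
  have hsum : HasSum (fun k => a k * u ^ k / (k ! : ℂ))
      (∑' k, (a k - 1) * u ^ k / (k ! : ℂ) + Complex.exp u) := by
    convert hdiff.hasSum.add hexp using 1
    ext k; ring
  rw [hsum.tsum_eq, add_sub_cancel_right]
  exact tsum_of_norm_bounded hexp4B hbound

noncomputable def gammaPowRatio (ν : ℝ) (k : ℕ) : ℝ :=
  Gamma (ν + 1) * ν ^ k / Gamma (ν + k + 1)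

section gammaPowRatio

variable {ν : ℝ}

theorem gammaPowRatio_zero (hν : 0 < ν) : gammaPowRatio ν 0 = 1 := by
  simp [gammaPowRatio, (Gamma_pos_of_pos (by linarith : 0 < ν + 1)).ne']

theorem gammaPowRatio_succ (hν : 0 < ν) (k : ℕ) :
    gammaPowRatio ν (k + 1) = gammaPowRatio ν k * (ν / (ν + k + 1)) := by
  have hk : 0 < ν + k + 1 := by positivity
  have hΓ := Gamma_pos_of_pos hk
  rw [gammaPowRatio, gammaPowRatio, Nat.cast_succ, ← add_assoc, Gamma_add_one hk.ne']
  field_simp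
  ring

theorem div_add_nat_add_one_le_one (hν : 0 < ν) (k : ℕ) : ν / (ν + k + 1) ≤ 1 :=
  (div_le_one (by positivity)).2 (by linarith [k.cast_nonneg (α := ℝ)])

theorem gammaPowRatio_le_one (hν : 0 < ν) (k : ℕ) : gammaPowRatio ν k ≤ 1 := by
  induction k with
  | zero => exact (gammaPowRatio_zero hν).le
  | succ k ih =>
    rw [gammaPowRatio_succ hν]
    exact mul_le_one₀ ih (by positivity) (div_add_nat_add_one_le_one hν k)

theorem one_sub_gammaPowRatio_le (hν : 0 < ν) (k : ℕ) :
    1 - gammaPowRatio ν k ≤ k ^ 2 / ν := by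
  induction k with
  | zero => simp [gammaPowRatio_zero hν]
  | succ k ih =>
    have hq : 1 - ν / (ν + k + 1) ≤ (k + 1) / ν := by
      rw [one_sub_div (by positivity : ν + k + 1 ≠ 0), add_assoc, add_sub_cancel_left]
      exact div_le_div_of_nonneg_left (by positivity) hν (by linarith)
    rw [gammaPowRatio_succ hν]
    calc 1 - gammaPowRatio ν k * (ν / (ν + k + 1))
        = (1 - gammaPowRatio ν k) + gammaPowRatio ν k * (1 - ν / (ν + k + 1)) := by ring
      _ ≤ k ^ 2 / ν + (k + 1) / ν :=
        add_le_add ih ((mul_le_of_le_one_left (sub_nonneg.2 (div_add_nat_add_one_le_one hν k))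
          (gammaPowRatio_le_one hν k)).trans hq)
      _ ≤ ((k + 1 : ℕ) : ℝ) ^ 2 / ν := by
        rw [← add_div]; push_cast; gcongr; nlinarith

end gammaPowRatio

theorem Gamma_mul_Itilde_ofReal_mul_eq_tsum (ν : ℝ) (u : ℂ) :
    (Gamma (ν + 1) : ℂ) * Itilde ν (ν * u)
      = ∑' k, (gammaPowRatio ν k : ℂ) * u ^ k / (k ! : ℂ) := by
  rw [Itilde, ← tsum_mul_left]
  congr 1 with k
  simp only [gammaPowRatio]
  push_cast
  ring

theorem norm_Gamma_mul_Itilde_ofReal_mul_sub_exp_le {ν B : ℝ} (hν : 0 < ν) {u : ℂ}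
    (hu : ‖u‖ ≤ B) :
    ‖(Gamma (ν + 1) : ℂ) * Itilde ν (ν * u) - Complex.exp u‖ ≤ ν⁻¹ * exp (4 * B) := by
  rw [Gamma_mul_Itilde_ofReal_mul_eq_tsum]
  refine norm_tsum_mul_pow_div_factorial_sub_exp_le (fun k => ?_) hu
  rw [← Complex.ofReal_one, ← Complex.ofReal_sub, Complex.norm_real, norm_eq_abs, abs_sub_comm,
    abs_of_nonneg (sub_nonneg.2 (gammaPowRatio_le_one hν k)), inv_mul_eq_div]
  exact one_sub_gammaPowRatio_le hν k

theorem tendstoUniformlyOn_Gamma_mul_Itilde_ofReal_mul (B : ℝ) :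
    TendstoUniformlyOn (fun ν u => (Gamma (ν + 1) : ℂ) * Itilde ν (ν * u)) Complex.exp atTop
      (Metric.closedBall 0 B) := by
  refine tendstoUniformlyOn_of_dist_le
    (by simpa using tendsto_inv_atTop_zero.mul_const (exp (4 * B)))
    ((eventually_gt_atTop 0).mono fun ν hν u hu => ?_)
  rw [dist_comm, dist_eq_norm]
  exact norm_Gamma_mul_Itilde_ofReal_mul_sub_exp_le hν (mem_closedBall_zero_iff.1 hu)

section Substitution

variable {c : ℝ}

theorem image_univ_const_mul_exp (hc : 0 < c) : (fun t => c * exp t) '' univ = Ioi 0 := by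
  ext u
  simp only [image_univ, mem_range, mem_Ioi]
  refine ⟨fun ⟨t, ht⟩ => ht ▸ by positivity, fun hu => ⟨log (u / c), ?_⟩⟩
  rw [exp_log (div_pos hu hc), mul_div_cancel₀ _ hc.ne']

theorem integral_const_mul_exp_mul_comp (hc : 0 < c) (g : ℝ → ℝ) :
    ∫ t, c * exp t * g (c * exp t) = ∫ u in Ioi 0, g u := by
  have := integral_image_eq_integral_abs_deriv_smul MeasurableSet.univ
    (fun t _ => ((hasDerivAt_exp t).const_mul c).hasDerivWithinAt)
    (fun a _ b _ h => exp_injective (mul_left_cancel₀ hc.ne' h)) g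
  rw [image_univ_const_mul_exp hc, Measure.restrict_univ] at this
  simp_rw [this, smul_eq_mul, abs_of_pos (mul_pos hc (exp_pos _))]

theorem integrable_const_mul_exp_mul_comp_iff (hc : 0 < c) (g : ℝ → ℝ) :
    Integrable (fun t => c * exp t * g (c * exp t)) ↔ IntegrableOn g (Ioi 0) := by
  have := integrableOn_image_iff_integrableOn_abs_deriv_smul MeasurableSet.univ
    (fun t _ => ((hasDerivAt_exp t).const_mul c).hasDerivWithinAt)
    (fun a _ b _ h => exp_injective (mul_left_cancel₀ hc.ne' h)) g
  rw [image_univ_const_mul_exp hc, integrableOn_univ] at this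
  simp_rw [this, smul_eq_mul, abs_of_pos (mul_pos hc (exp_pos _))]

end Substitution

theorem integral_eq_integral_Ioi_add_comp_neg {f : ℝ → ℝ} (hf : Integrable f) :
    ∫ t, f t = ∫ t in Ioi 0, (f t + f (-t)) := by
  rw [integral_add hf.integrableOn hf.comp_neg.integrableOn, integral_comp_neg_Ioi, neg_zero,
    add_comm, intervalIntegral.integral_Iic_add_Ioi hf.integrableOn hf.integrableOn]

section BesselK

variable {ν x : ℝ}

theorem integrableOn_exp_neg_sub_div_mul_rpow {c : ℝ} (hν : 0 < ν) (hc : 0 ≤ c) :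
    IntegrableOn (fun u => exp (-u - c / u) * u ^ (ν - 1)) (Ioi 0) := by
  refine (GammaIntegral_convergent hν).mono' (by fun_prop) ?_
  filter_upwards [ae_restrict_mem measurableSet_Ioi] with u (hu : 0 < u)
  rw [norm_of_nonneg (by positivity)]
  gcongr
  linarith [div_nonneg hc hu.le]

theorem half_mul_exp_mul_exp_neg_sub_div_mul_rpow (hx : 0 < x) (ν t : ℝ) :
    x / 2 * exp t *
        (exp (-(x / 2 * exp t) - x ^ 2 / 4 / (x / 2 * exp t)) * (x / 2 * exp t) ^ (ν - 1))
      = (x / 2) ^ ν * exp (ν * t - x * cosh t) := by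
  have hb : 0 < x / 2 * exp t := by positivity
  have harg : -(x / 2 * exp t) - x ^ 2 / 4 / (x / 2 * exp t) = -x * cosh t := by
    rw [cosh_eq, exp_neg]
    field_simp
    ring
  rw [mul_left_comm, rpow_sub_one hb.ne', mul_div_cancel₀ _ hb.ne',
    mul_rpow (by positivity) (exp_pos t).le, ← exp_mul, harg, mul_left_comm, ← exp_add]
  ring_nf

theorem rpow_mul_integral_exp_mul_sub_mul_cosh (hx : 0 < x) (ν : ℝ) :
    (x / 2) ^ ν * ∫ t, exp (ν * t - x * cosh t)
      = ∫ u in Ioi 0, exp (-u - x ^ 2 / 4 / u) * u ^ (ν - 1) := by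
  rw [← integral_const_mul_exp_mul_comp (by positivity : 0 < x / 2), ← integral_const_mul]
  simp_rw [half_mul_exp_mul_exp_neg_sub_div_mul_rpow hx]

theorem integrable_exp_mul_sub_mul_cosh (hx : 0 < x) (hν : 0 < ν) :
    Integrable fun t => exp (ν * t - x * cosh t) := by
  have := (integrable_const_mul_exp_mul_comp_iff (by positivity : 0 < x / 2) _).2
    (integrableOn_exp_neg_sub_div_mul_rpow hν (by positivity : 0 ≤ x ^ 2 / 4))
  simp_rw [half_mul_exp_mul_exp_neg_sub_div_mul_rpow hx] at this
  exact (integrable_const_mul_iff (IsUnit.mk0 _ (by positivity)) _).1 this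

theorem besselK_eq_half_integral (hx : 0 < x) (hν : 0 < ν) :
    besselK ν x = 2⁻¹ * ∫ t, exp (ν * t - x * cosh t) := by
  rw [integral_eq_integral_Ioi_add_comp_neg (integrable_exp_mul_sub_mul_cosh hx hν),
    ← integral_const_mul, besselK]
  congr 1 with t
  rw [cosh_neg, cosh_eq (ν * t), sub_eq_add_neg, sub_eq_add_neg, exp_add, exp_add]
  ring_nf

theorem besselK_eq_integral (hx : 0 < x) (hν : 0 < ν) :
    besselK ν x
      = 2⁻¹ * (x / 2) ^ (-ν) * ∫ u in Ioi 0, exp (-u - x ^ 2 / 4 / u) * u ^ (ν - 1) := by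
  rw [← rpow_mul_integral_exp_mul_sub_mul_cosh hx, besselK_eq_half_integral hx hν,
    rpow_neg (by positivity)]
  field_simp

end BesselK

section GammaMoment

variable {ν : ℝ}

theorem exp_neg_mul_rpow_mul_div_sub_one_sq {u : ℝ} (hu : 0 < u) (ν : ℝ) :
    exp (-u) * u ^ (ν - 1) * (ν / u - 1) ^ 2
      = ν ^ 2 * (exp (-u) * u ^ (ν - 2 - 1)) - 2 * ν * (exp (-u) * u ^ (ν - 1 - 1))
        + exp (-u) * u ^ (ν - 1) := by
  rw [rpow_sub_one hu.ne' (ν - 2), rpow_sub_one hu.ne' (ν - 1),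
    show ν - 2 = ν - 1 - 1 by ring, rpow_sub_one hu.ne' (ν - 1)]
  field_simp
  ring

theorem integrableOn_exp_neg_mul_rpow_mul_div_sub_one_sq (hν : 2 < ν) :
    IntegrableOn (fun u => exp (-u) * u ^ (ν - 1) * (ν / u - 1) ^ 2) (Ioi 0) := by
  refine IntegrableOn.congr_fun ?_
    (fun u hu => (exp_neg_mul_rpow_mul_div_sub_one_sq hu ν).symm) measurableSet_Ioi
  exact (((GammaIntegral_convergent (by linarith)).const_mul _).sub
    ((GammaIntegral_convergent (by linarith)).const_mul _)).add
    (GammaIntegral_convergent (by linarith))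

theorem integral_exp_neg_mul_rpow_mul_div_sub_one_sq (hν : 2 < ν) :
    ∫ u in Ioi 0, exp (-u) * u ^ (ν - 1) * (ν / u - 1) ^ 2
      = (ν + 2) / ((ν - 1) * (ν - 2)) * Gamma ν := by
  have I2 := GammaIntegral_convergent (by linarith : 0 < ν - 2)
  have I1 := GammaIntegral_convergent (by linarith : 0 < ν - 1)
  have I0 := GammaIntegral_convergent (by linarith : 0 < ν)
  have I21 : IntegrableOn (fun u => ν ^ 2 * (exp (-u) * u ^ (ν - 2 - 1))
      - 2 * ν * (exp (-u) * u ^ (ν - 1 - 1))) (Ioi 0) := (I2.const_mul _).sub (I1.const_mul _)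
  rw [setIntegral_congr_fun measurableSet_Ioi
      (fun u hu => exp_neg_mul_rpow_mul_div_sub_one_sq hu ν),
    integral_add I21 I0, integral_sub (I2.const_mul _) (I1.const_mul _), integral_const_mul,
    integral_const_mul, ← Gamma_eq_integral (by linarith), ← Gamma_eq_integral (by linarith),
    ← Gamma_eq_integral (by linarith)]
  have h1 : Gamma ν = (ν - 1) * Gamma (ν - 1) := by
    simpa using Gamma_add_one (s := ν - 1) (by linarith)
  have h2 : Gamma (ν - 1) = (ν - 2) * Gamma (ν - 2) := by
    simpa [show ν - 2 + 1 = ν - 1 by ring] using Gamma_add_one (s := ν - 2) (by linarith)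
  have : ν - 1 ≠ 0 := by linarith
  have : ν - 2 ≠ 0 := by linarith
  rw [h1, h2]
  field_simp
  ring

end GammaMoment

theorem abs_exp_neg_sub_exp_neg_le {p q : ℝ} (hp : 0 ≤ p) (hq : 0 ≤ q) :
    |exp (-p) - exp (-q)| ≤ |p - q| := by
  wlog hqp : q ≤ p generalizing p q
  · rw [abs_sub_comm, abs_sub_comm p]
    exact this hq hp (le_of_not_ge hqp)
  rw [abs_sub_comm, abs_of_nonneg (sub_nonneg.2 (exp_le_exp.2 (neg_le_neg hqp))),
    abs_of_nonneg (sub_nonneg.2 hqp)]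
  have h1 := one_sub_le_exp_neg (p - q)
  have h2 : exp (-q) ≤ 1 := exp_le_one_iff.2 (neg_nonpos.2 hq)
  have h3 : exp (-p) = exp (-q) * exp (-(p - q)) := by rw [← exp_add]; ring_nf
  nlinarith [exp_pos (-q)]

theorem abs_exp_neg_mul_sq_div_sub_exp_neg_sq_le {ν u s : ℝ} (hν : 0 ≤ ν) (hu : 0 < u)
    (hs : 0 < s) (y : ℝ) :
    |exp (-(ν * y ^ 2 / u)) - exp (-y ^ 2)| ≤ y ^ 2 / 2 * (s + (ν / u - 1) ^ 2 / s) := by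
  calc |exp (-(ν * y ^ 2 / u)) - exp (-y ^ 2)| ≤ |ν * y ^ 2 / u - y ^ 2| :=
        abs_exp_neg_sub_exp_neg_le (by positivity) (sq_nonneg y)
    _ = y ^ 2 * |ν / u - 1| := by
        rw [← abs_of_nonneg (sq_nonneg y), ← abs_mul, abs_of_nonneg (sq_nonneg y)]
        ring_nf
    _ ≤ y ^ 2 * ((s + (ν / u - 1) ^ 2 / s) / 2) := by
        gcongr
        generalize ν / u - 1 = a
        rw [le_div_iff₀ two_pos, ← sub_nonneg]
        have : s + a ^ 2 / s - |a| * 2 = (s - |a|) ^ 2 / s := by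
          field_simp; rw [← sq_abs a]; ring
        rw [this]
        positivity
    _ = y ^ 2 / 2 * (s + (ν / u - 1) ^ 2 / s) := by ring

theorem abs_integral_exp_neg_sub_mul_sq_div_mul_rpow_sub_le {ν : ℝ} (hν : 2 < ν) (y : ℝ) :
    |(∫ u in Ioi 0, exp (-u - ν * y ^ 2 / u) * u ^ (ν - 1)) - Gamma ν * exp (-y ^ 2)|
      ≤ y ^ 2 * √((ν + 2) / ((ν - 1) * (ν - 2))) * Gamma ν := by
  have hν0 : 0 < ν := by linarith
  set R := (ν + 2) / ((ν - 1) * (ν - 2))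
  have hR : 0 < R := div_pos (by linarith) (mul_pos (by linarith) (by linarith))
  set s := √R
  have hs : 0 < s := sqrt_pos.2 hR
  have hGamma := GammaIntegral_convergent hν0
  have hmoment := integrableOn_exp_neg_mul_rpow_mul_div_sub_one_sq hν
  have hdiff : (∫ u in Ioi 0, exp (-u - ν * y ^ 2 / u) * u ^ (ν - 1)) - Gamma ν * exp (-y ^ 2)
      = ∫ u in Ioi 0, exp (-u) * u ^ (ν - 1) * (exp (-(ν * y ^ 2 / u)) - exp (-y ^ 2)) := by
    rw [Gamma_eq_integral hν0, ← integral_mul_const, ← integral_sub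
      (integrableOn_exp_neg_sub_div_mul_rpow (c := ν * y ^ 2) hν0 (by positivity))
      (hGamma.mul_const _)]
    refine setIntegral_congr_fun measurableSet_Ioi fun u _ => ?_
    rw [sub_eq_add_neg (-u), exp_add]
    ring
  have hbound : ∀ᵐ u ∂volume.restrict (Ioi 0),
      ‖exp (-u) * u ^ (ν - 1) * (exp (-(ν * y ^ 2 / u)) - exp (-y ^ 2))‖
        ≤ y ^ 2 / 2 * (s * (exp (-u) * u ^ (ν - 1))
          + exp (-u) * u ^ (ν - 1) * (ν / u - 1) ^ 2 / s) := by
    filter_upwards [ae_restrict_mem measurableSet_Ioi] with u (hu : 0 < u)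
    rw [norm_mul, norm_of_nonneg (by positivity), norm_eq_abs]
    calc exp (-u) * u ^ (ν - 1) * |exp (-(ν * y ^ 2 / u)) - exp (-y ^ 2)|
        ≤ exp (-u) * u ^ (ν - 1) * (y ^ 2 / 2 * (s + (ν / u - 1) ^ 2 / s)) := by
          gcongr
          exact abs_exp_neg_mul_sq_div_sub_exp_neg_sq_le hν0.le hu hs y
      _ = _ := by ring
  rw [hdiff]
  calc _ ≤ ∫ u in Ioi 0, y ^ 2 / 2 *
        (s * (exp (-u) * u ^ (ν - 1)) + exp (-u) * u ^ (ν - 1) * (ν / u - 1) ^ 2 / s) :=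
        norm_integral_le_of_norm_le
          (((hGamma.const_mul s).add (hmoment.div_const s)).const_mul _) hbound
    _ = y ^ 2 / 2 * (s * Gamma ν + R * Gamma ν / s) := by
        rw [integral_const_mul, integral_add (hGamma.const_mul s) (hmoment.div_const s),
          integral_const_mul, integral_div, ← Gamma_eq_integral hν0,
          integral_exp_neg_mul_rpow_mul_div_sub_one_sq hν]
    _ = y ^ 2 * s * Gamma ν := by
        rw [← sq_sqrt hR.le]
        field_simp
        ring

noncomputable def besselKScaled (ν y : ℝ) : ℝ :=
  2 * ν ^ (ν / 2) * y ^ ν * besselK ν (2 * √ν * y) / Gamma ν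

section besselKScaled

variable {ν y : ℝ}

theorem besselKScaled_eq_integral (hν : 0 < ν) (hy : 0 < y) :
    besselKScaled ν y = (∫ u in Ioi 0, exp (-u - ν * y ^ 2 / u) * u ^ (ν - 1)) / Gamma ν := by
  have hsqrt : 0 < √ν := sqrt_pos.2 hν
  have hsq : (2 * √ν * y) ^ 2 / 4 = ν * y ^ 2 := by
    rw [mul_pow, mul_pow, sq_sqrt hν.le]; ring
  have hpow : (2 * √ν * y / 2) ^ (-ν) * ν ^ (ν / 2) * y ^ ν = 1 := by
    rw [show 2 * √ν * y / 2 = √ν * y by ring, mul_rpow hsqrt.le hy.le, sqrt_eq_rpow,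
      ← rpow_mul hν.le, one_div_mul_eq_div, neg_div, rpow_neg hν.le, rpow_neg hy.le]
    field_simp
  rw [besselKScaled, besselK_eq_integral (by positivity) hν, hsq]
  linear_combination (∫ u in Ioi 0, exp (-u - ν * y ^ 2 / u) * u ^ (ν - 1)) / Gamma ν * hpow

theorem abs_besselKScaled_sub_exp_le (hν : 2 < ν) (hy : 0 < y) :
    |besselKScaled ν y - exp (-y ^ 2)| ≤ y ^ 2 * √((ν + 2) / ((ν - 1) * (ν - 2))) := by
  have hΓ := Gamma_pos_of_pos (by linarith : 0 < ν)
  rw [besselKScaled_eq_integral (by linarith) hy, div_sub' hΓ.ne', abs_div, abs_of_pos hΓ,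
    div_le_iff₀ hΓ]
  exact abs_integral_exp_neg_sub_mul_sq_div_mul_rpow_sub_le hν y

theorem tendsto_div_mul_sub_one_mul_sub_two_atTop :
    Tendsto (fun ν : ℝ => (ν + 2) / ((ν - 1) * (ν - 2))) atTop (𝓝 0) := by
  refine tendsto_of_tendsto_of_tendsto_of_le_of_le' tendsto_const_nhds
    (tendsto_const_nhds.div_atTop tendsto_id : Tendsto (fun ν : ℝ => 8 / ν) atTop (𝓝 0)) ?_ ?_
  all_goals filter_upwards [eventually_ge_atTop 4] with ν hν
  · exact div_nonneg (by linarith) (mul_nonneg (by linarith) (by linarith))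
  · rw [div_le_div_iff₀ (mul_pos (by linarith) (by linarith)) (by linarith)]
    nlinarith

theorem tendstoUniformlyOn_besselKScaled (b : ℝ) :
    TendstoUniformlyOn besselKScaled (fun y => exp (-y ^ 2)) atTop (Ioc 0 b) := by
  refine tendstoUniformlyOn_of_dist_le (δ := fun ν => b ^ 2 * √((ν + 2) / ((ν - 1) * (ν - 2))))
    (by simpa using (tendsto_div_mul_sub_one_mul_sub_two_atTop.sqrt).const_mul (b ^ 2))
    ((eventually_gt_atTop 2).mono fun ν hν y ⟨hy, hyb⟩ => ?_)
  rw [dist_comm, Real.dist_eq]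
  exact (abs_besselKScaled_sub_exp_le hν hy).trans (by gcongr)

theorem tendstoUniformlyOn_sqrt_besselKScaled_mul (b : ℝ) :
    TendstoUniformlyOn (fun ν (y : ℝ × ℝ) => √(besselKScaled ν y.1 * besselKScaled ν y.2))
      (fun y => √(exp (-y.1 ^ 2) * exp (-y.2 ^ 2))) atTop (Ioc 0 b ×ˢ Ioc 0 b) := by
  have hexp : ∀ y : ℝ, ‖exp (-y ^ 2)‖ ≤ 1 := fun y => by
    rw [norm_of_nonneg (exp_pos _).le, exp_le_one_iff, neg_nonpos]
    positivity
  exact uniformContinuous_sqrt.comp_tendstoUniformlyOn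
    ((((tendstoUniformlyOn_besselKScaled b).comp Prod.fst).mono fun y hy => hy.1).mul_of_bounded
      (((tendstoUniformlyOn_besselKScaled b).comp Prod.snd).mono fun y hy => hy.2)
      (fun y _ => hexp y.1) (fun y _ => hexp y.2))

end besselKScaled

theorem sqrt_besselK_mul_eq_sqrt_besselKScaled_mul {ν a b : ℝ} (hν : 0 < ν) (ha : 0 < a)
    (hb : 0 < b) :
    2 * ν ^ (ν / 2 + 1) * (a * b) ^ (ν / 2) *
        √(besselK ν (2 * √ν * a) * besselK ν (2 * √ν * b))
      = Gamma (ν + 1) * √(besselKScaled ν a * besselKScaled ν b) := by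
  have hΓ := Gamma_pos_of_pos hν
  have hsq : ∀ {x : ℝ}, 0 < x → (x ^ (ν / 2)) ^ 2 = x ^ ν := fun hx => by
    rw [← rpow_mul_natCast hx.le]; norm_num
  have hprod : besselKScaled ν a * besselKScaled ν b
      = (2 * ν ^ (ν / 2) * (a * b) ^ (ν / 2) / Gamma ν) ^ 2
        * (besselK ν (2 * √ν * a) * besselK ν (2 * √ν * b)) := by
    rw [besselKScaled, besselKScaled, mul_rpow ha.le hb.le, ← hsq ha, ← hsq hb]
    field_simp
  rw [hprod, sqrt_mul (sq_nonneg _), sqrt_sq (by positivity), Gamma_add_one hν.ne',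
    rpow_add_one hν.ne']
  field_simp

theorem ofReal_sqrt_exp_neg_mul_exp_neg_mul_cexp (a b : ℝ) (u : ℂ) :
    ((√(exp (-a) * exp (-b)) : ℝ) : ℂ) * Complex.exp u
      = Complex.exp (u - ((a / 2 : ℝ) : ℂ) - ((b / 2 : ℝ) : ℂ)) := by
  rw [show exp (-a) * exp (-b) = exp (-(a / 2) - b / 2) ^ 2 by
      rw [← exp_add, sq, ← exp_add]; ring_nf,
    sqrt_sq (exp_pos _).le, Complex.ofReal_exp, ← Complex.exp_add]
  push_cast
  ring_nf

theorem bessel_product_to_ginibre (Ω : Set (ℂ × ℂ)) (hΩ : IsCompact Ω)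
    (hΩ' : ∀ p ∈ Ω, p.1 ≠ 0 ∧ p.2 ≠ 0) :
    TendstoUniformlyOn
      (fun (ν : ℝ) (p : ℂ × ℂ) =>
        ((2 * ν ^ (ν / 2 + 1) * (‖p.1 * p.2‖) ^ (ν / 2) *
            Real.sqrt (besselK ν (2 * Real.sqrt ν * ‖p.1‖) *
              besselK ν (2 * Real.sqrt ν * ‖p.2‖)) : ℝ) : ℂ) *
          Itilde ν ((ν : ℂ) * p.1 * (starRingEnd ℂ) p.2))
      (fun p =>
        Complex.exp (p.1 * (starRingEnd ℂ) p.2 - (((‖p.1‖) ^ 2 / 2 : ℝ) : ℂ) -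
          (((‖p.2‖) ^ 2 / 2 : ℝ) : ℂ)))
      atTop Ω := by
  obtain ⟨C, hC⟩ := hΩ.exists_bound_of_continuousOn continuousOn_id
  have hnorm : MapsTo (fun p : ℂ × ℂ => (‖p.1‖, ‖p.2‖)) Ω (Ioc 0 C ×ˢ Ioc 0 C) := fun p hp =>
    ⟨⟨norm_pos_iff.2 (hΩ' p hp).1, (norm_fst_le p).trans (hC p hp)⟩,
      ⟨norm_pos_iff.2 (hΩ' p hp).2, (norm_snd_le p).trans (hC p hp)⟩⟩
  have hzw : MapsTo (fun p : ℂ × ℂ => p.1 * (starRingEnd ℂ) p.2) Ω (Metric.closedBall 0 (C ^ 2)) :=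
    fun p hp => by
      obtain ⟨⟨hz, hzC⟩, -, hwC⟩ := hnorm hp
      rw [mem_closedBall_zero_iff, norm_mul, Complex.norm_conj, sq]
      exact mul_le_mul hzC hwC (norm_nonneg _) (hz.le.trans hzC)
  have hA := Complex.isometry_ofReal.uniformContinuous.comp_tendstoUniformlyOn
    (((tendstoUniformlyOn_sqrt_besselKScaled_mul C).comp _).mono hnorm)
  have hT := ((tendstoUniformlyOn_Gamma_mul_Itilde_ofReal_mul (C ^ 2)).comp _).mono hzw
  refine ((hA.mul_of_bounded hT (Cf := 1) (Cg := exp (C ^ 2)) ?_ ?_).congr ?_).congr_right ?_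
  · intro p _
    simp only [Function.comp_apply, Complex.norm_real, norm_of_nonneg (sqrt_nonneg _), sqrt_le_one,
      ← exp_add, exp_le_one_iff]
    nlinarith
  · intro p hp
    rw [Function.comp_apply, Complex.norm_exp, exp_le_exp]
    exact (Complex.re_le_norm _).trans (mem_closedBall_zero_iff.1 (hzw hp))
  · filter_upwards [eventually_gt_atTop 0] with ν hν p hp
    obtain ⟨⟨hz, -⟩, hw, -⟩ := hnorm hp
    simp only [Function.comp_apply]
    rw [norm_mul, sqrt_besselK_mul_eq_sqrt_besselKScaled_mul hν hz hw]
    push_cast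
    rw [mul_assoc (ν : ℂ)]
    ring
  · exact fun p _ => ofReal_sqrt_exp_neg_mul_exp_neg_mul_cexp _ _ _
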